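/- Under the assumptions of the sketched residual identity — A ∈ ℝ^{n×n}; V_{k+1} ∈ ℝ^{n×(k+1)} with first k columns V_k and first column v₁; A V_k = V_{k+1} H̲_k; S ∈ ℝ^{s×n}; S V_{k+1} = Q_{k+1} T_{k+1} with Q_{k+1} having orthonormal columns and T_{k+1} upper triangular with strictly positive diagonal and leading principal k×k submatrix T_k; r₀ = ‖r₀‖₂ v₁ — set β = ‖S r₀‖₂ and M = T_{k+1} H̲_k T_k⁻¹. Then y_k ∈ ℝ^k minimizes y ↦ ‖S A V_k y − S r₀‖₂ over ℝ^k if and only if z_k = T_k y_k minimizes z ↦ ‖M z − β e₁‖₂ over ℝ^k; moreover, for any such minimizer, ‖S(A V_k y_k − r₀)‖₂ = ‖M z_k − β e₁‖₂. -/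
import Mathlib

open Matrix

/-- The Euclidean norm of a vector in `ℝ^n`. -/
noncomputable def euclNorm {n : ℕ} (v : Fin n → ℝ) : ℝ := Real.sqrt (∑ i, v i ^ 2)

lemma euclNorm_nonneg {n : ℕ} (v : Fin n → ℝ) : 0 ≤ euclNorm v := Real.sqrt_nonneg _

lemma euclNorm_smul {n : ℕ} (c : ℝ) (v : Fin n → ℝ) :
    euclNorm (c • v) = |c| * euclNorm v := by
  unfold euclNorm
  rw [← Real.sqrt_sq_eq_abs, ← Real.sqrt_mul (sq_nonneg c), Finset.mul_sum]
  congr 1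
  exact Finset.sum_congr rfl fun i _ => by simp [mul_pow]

lemma euclNorm_mulVec_orth {m s : ℕ} (Q : Matrix (Fin s) (Fin m) ℝ)
    (hQ : Qᵀ * Q = 1) (w : Fin m → ℝ) : euclNorm (Q.mulVec w) = euclNorm w := by
  unfold euclNorm
  congr 1
  have h1 : ∑ i, (Q.mulVec w) i ^ 2 = (Q.mulVec w) ⬝ᵥ (Q.mulVec w) := by
    simp [dotProduct, sq]
  have h2 : ∑ i, w i ^ 2 = w ⬝ᵥ w := by simp [dotProduct, sq]
  rw [h1, h2, Matrix.dotProduct_mulVec, ← Matrix.vecMul_transpose,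
    Matrix.vecMul_vecMul, hQ, Matrix.vecMul_one]

lemma euclNorm_single {m : ℕ} : euclNorm (Pi.single 0 1 : Fin (m + 1) → ℝ) = 1 := by
  unfold euclNorm
  rw [show (∑ i, (Pi.single 0 1 : Fin (m+1) → ℝ) i ^ 2) = 1 by
    simp [Pi.single_apply]]
  exact Real.sqrt_one

/-- Under the assumptions of the sketched residual identity, `y_k` minimizes
`y ↦ ‖S A V_k y − S r₀‖₂` over `ℝ^k` if and only if `z_k = T_k y_k` minimizes
`z ↦ ‖M z − β e₁‖₂` over `ℝ^k`; moreover, for any such minimizer,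
`‖S(A V_k y_k − r₀)‖₂ = ‖M z_k − β e₁‖₂`. -/
theorem sketched_gmres_projected_problem {n k s : ℕ}
    (A : Matrix (Fin n) (Fin n) ℝ)
    (V : Matrix (Fin n) (Fin (k + 1)) ℝ)
    (Vk : Matrix (Fin n) (Fin k) ℝ)
    (hVk : Vk = V.submatrix id Fin.castSucc)
    (Hb : Matrix (Fin (k + 1)) (Fin k) ℝ)
    (hArn : A * Vk = V * Hb)
    (S : Matrix (Fin s) (Fin n) ℝ)
    (Q : Matrix (Fin s) (Fin (k + 1)) ℝ) (hQ : Qᵀ * Q = 1)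
    (T : Matrix (Fin (k + 1)) (Fin (k + 1)) ℝ)
    (hTri : ∀ i j : Fin (k + 1), j < i → T i j = 0)
    (hTdiag : ∀ i : Fin (k + 1), 0 < T i i)
    (hQR : S * V = Q * T)
    (Tk : Matrix (Fin k) (Fin k) ℝ)
    (hTk : Tk = T.submatrix Fin.castSucc Fin.castSucc)
    (r₀ : Fin n → ℝ) (hr : r₀ = euclNorm r₀ • (fun i => V i 0))
    (β : ℝ) (hβ : β = euclNorm (S.mulVec r₀))
    (M : Matrix (Fin (k + 1)) (Fin k) ℝ) (hM : M = T * Hb * Tk⁻¹) :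
    ∀ yk : Fin k → ℝ,
      ((∀ y : Fin k → ℝ,
          euclNorm (S.mulVec ((A * Vk).mulVec yk) - S.mulVec r₀)
            ≤ euclNorm (S.mulVec ((A * Vk).mulVec y) - S.mulVec r₀)) ↔
        (∀ z : Fin k → ℝ,
          euclNorm (M.mulVec (Tk.mulVec yk) - β • (Pi.single 0 1 : Fin (k + 1) → ℝ))
            ≤ euclNorm (M.mulVec z - β • (Pi.single 0 1 : Fin (k + 1) → ℝ)))) ∧
      ((∀ y : Fin k → ℝ,
          euclNorm (S.mulVec ((A * Vk).mulVec yk) - S.mulVec r₀)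
            ≤ euclNorm (S.mulVec ((A * Vk).mulVec y) - S.mulVec r₀)) →
        euclNorm (S.mulVec ((A * Vk).mulVec yk - r₀))
          = euclNorm (M.mulVec (Tk.mulVec yk) - β • (Pi.single 0 1 : Fin (k + 1) → ℝ))) := by
  -- Tk is invertible
  have hTkdet : IsUnit Tk.det := by
    have htri : Tk.BlockTriangular id := by
      intro i j hij
      rw [hTk]
      exact hTri _ _ (by simpa using hij)
    rw [Matrix.det_of_upperTriangular htri]
    refine (Finset.prod_pos fun i _ => ?_).ne'.isUnit
    rw [hTk]; exact hTdiag _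
  have hMTk : M * Tk = T * Hb := by
    rw [hM, Matrix.mul_assoc, Matrix.nonsing_inv_mul Tk hTkdet, Matrix.mul_one]
  -- S * (A * Vk) = Q * (M * Tk)
  have hSAV : S * (A * Vk) = Q * (M * Tk) := by
    rw [hArn, ← Matrix.mul_assoc, hQR, Matrix.mul_assoc, ← hMTk]
  -- S r₀ = Q (β • e₀)
  have hTcol : T.mulVec (Pi.single 0 1) = T 0 0 • (Pi.single 0 1 : Fin (k+1) → ℝ) := by
    funext i
    rw [Matrix.mulVec_single]
    rcases eq_or_ne i 0 with h | h
    · subst h; simp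
    · simp [Pi.single_apply, h, hTri i 0 (by
        exact lt_of_le_of_ne (Fin.zero_le i) (Ne.symm h))]
  have hv1 : (fun i => V i 0) = V.mulVec (Pi.single 0 1) := by
    funext i; rw [Matrix.mulVec_single]; simp
  have hSr₀' : S.mulVec r₀ = (euclNorm r₀ * T 0 0) • Q.mulVec (Pi.single 0 1) := by
    conv_lhs => rw [hr, hv1, Matrix.mulVec_smul, Matrix.mulVec_mulVec, hQR,
      ← Matrix.mulVec_mulVec, hTcol, Matrix.mulVec_smul]
    rw [smul_smul]
  have hβval : β = euclNorm r₀ * T 0 0 := by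
    rw [hβ, hSr₀', euclNorm_smul, euclNorm_mulVec_orth Q hQ, euclNorm_single, mul_one,
      abs_of_nonneg (mul_nonneg (euclNorm_nonneg _) (hTdiag 0).le)]
  have hSr₀ : S.mulVec r₀ = Q.mulVec (β • (Pi.single 0 1 : Fin (k+1) → ℝ)) := by
    rw [Matrix.mulVec_smul, hSr₀', hβval]
  -- key pointwise identity
  have key : ∀ y : Fin k → ℝ,
      euclNorm (S.mulVec ((A * Vk).mulVec y) - S.mulVec r₀)
        = euclNorm (M.mulVec (Tk.mulVec y) - β • (Pi.single 0 1 : Fin (k+1) → ℝ)) := by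
    intro y
    have : S.mulVec ((A * Vk).mulVec y) - S.mulVec r₀
        = Q.mulVec (M.mulVec (Tk.mulVec y) - β • (Pi.single 0 1 : Fin (k+1) → ℝ)) := by
      rw [Matrix.mulVec_sub, hSr₀, Matrix.mulVec_mulVec, hSAV,
        ← Matrix.mulVec_mulVec, Matrix.mulVec_mulVec y M Tk]
    rw [this, euclNorm_mulVec_orth Q hQ]
  intro yk
  constructor
  · constructor
    · intro h z
      have hz : Tk.mulVec (Tk⁻¹.mulVec z) = z := by
        rw [Matrix.mulVec_mulVec, Matrix.mul_nonsing_inv Tk hTkdet, Matrix.one_mulVec]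
      calc euclNorm (M.mulVec (Tk.mulVec yk) - β • (Pi.single 0 1 : Fin (k+1) → ℝ))
          = euclNorm (S.mulVec ((A * Vk).mulVec yk) - S.mulVec r₀) := (key yk).symm
        _ ≤ euclNorm (S.mulVec ((A * Vk).mulVec (Tk⁻¹.mulVec z)) - S.mulVec r₀) :=
            h (Tk⁻¹.mulVec z)
        _ = euclNorm (M.mulVec z - β • (Pi.single 0 1 : Fin (k+1) → ℝ)) := by
            rw [key, hz]
    · intro h y
      rw [key, key]
      exact h (Tk.mulVec y)
  · intro _
    rw [Matrix.mulVec_sub, key]
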